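/- arXiv:2408.05561 — 2 statements merged into one kernel-verified Lean document; each statement's English description precedes it below -/
import Mathlib

section
/- Let K be a field and R = K[x_1,…,x_n]. If a square-free monomial ideal I ⊆ R is of well-nearly normally torsion-free type, then I has the persistence property, that is, Ass(R/I^k) ⊆ Ass(R/I^{k+1}) for all integers k ≥ 1. -/
/-!
Only `𝔮 = (x_i : i ∈ A)` can be lost in passing from `I ^ k` to `I ^ (k + 1)`, and only when
`k > m`. Suppose it is. Then every associated prime of `I ^ (k + 1)` is minimal over `I`, hence
does not contain `𝔮`, so `I ^ (k + 1) : 𝔮 ^ L = I ^ (k + 1)`. Together with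
`I ^ k = J ∩ 𝔮 ^ L` (`L = ℓ k`, `J = ⋂ 𝔭 ^ k`) this gives `J * I ⊆ I ^ (k + 1) ⊆ 𝔮 ^ L * I`.
The least number of variables from `A` in a monomial of `f` turns products into sums (it is the
`t`-adic order of `f (x_i t : i ∈ A)` in the domain `R[t]`), and `𝔮 ^ L` consists of the `f`
for which it is at least `L`; so `I` can be cancelled: `J ⊆ 𝔮 ^ L` and `I ^ k = J`. But the
minimal primes of `I` are again generated by variables, so each `𝔭 ^ k` is `𝔭`-primary, and
`𝔮 ∈ Ass (R / J)` would then lie in a minimal prime of `I`, making `𝔮` itself minimal.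
-/

open MvPolynomial

/-- A square-free monomial ideal `I` is of well-nearly normally torsion-free type. -/
def IsWellNearlyNTFType {K : Type*} [Field K] {n : ℕ}
    (I : Ideal (MvPolynomial (Fin n) K)) : Prop :=
  (∃ S : Set (Finset (Fin n)),
      I = Ideal.span ((fun T => ∏ i ∈ T, (X i : MvPolynomial (Fin n) K)) '' S)) ∧
  ∃ (ℓ m : ℕ) (A : Set (Fin n)), 1 ≤ ℓ ∧ 1 ≤ m ∧
    (∀ t : ℕ, 1 ≤ t → t ≤ m →
      associatedPrimes (MvPolynomial (Fin n) K) ((MvPolynomial (Fin n) K) ⧸ I ^ t) =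
        I.minimalPrimes) ∧
    (∀ t : ℕ, m + 1 ≤ t →
      associatedPrimes (MvPolynomial (Fin n) K) ((MvPolynomial (Fin n) K) ⧸ I ^ t) ⊆
        I.minimalPrimes ∪ {Ideal.span (X '' A)}) ∧
    (∀ s : ℕ, m + 1 ≤ s →
      Ideal.span (X '' A) ∈
        associatedPrimes (MvPolynomial (Fin n) K) ((MvPolynomial (Fin n) K) ⧸ I ^ s) →
      I ^ s = (⨅ p ∈ I.minimalPrimes, p ^ s) ⊓ (Ideal.span (X '' A)) ^ (ℓ * s))

namespace Ideal

variable {R : Type*} [CommRing R]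

lemma minimalPrimes_subset_associatedPrimes_quotient [IsNoetherianRing R] (J : Ideal R) :
    J.minimalPrimes ⊆ associatedPrimes R (R ⧸ J) := by
  simpa [Ideal.annihilator_quotient] using
    Module.associatedPrimes.minimalPrimes_annihilator_subset_associatedPrimes R (R ⧸ J)

lemma minimalPrimes_pow (I : Ideal R) {k : ℕ} (hk : k ≠ 0) :
    (I ^ k).minimalPrimes = I.minimalPrimes := by
  rw [← radical_minimalPrimes, radical_pow _ hk, radical_minimalPrimes]

lemma le_of_mem_associatedPrimes_quotient {J P : Ideal R}
    (h : P ∈ associatedPrimes R (R ⧸ J)) : J ≤ P := by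
  simpa [Submodule.annihilator_top, Ideal.annihilator_quotient] using h.annihilator_le

lemma mem_of_forall_mul_mem_of_not_le_associatedPrimes [IsNoetherianRing R] {J 𝔞 : Ideal R}
    (h𝔞 : ∀ P ∈ associatedPrimes R (R ⧸ J), ¬ 𝔞 ≤ P) {w : R} (hw : ∀ c ∈ 𝔞, c * w ∈ J) :
    w ∈ J := by
  by_contra hwJ
  obtain ⟨P, hP, hle⟩ := exists_le_isAssociatedPrime_of_isNoetherianRing R
    (Ideal.Quotient.mk J w) (by rwa [Ne, Quotient.eq_zero_iff_mem])
  refine h𝔞 P hP fun c hc => hle ?_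
  simpa [Submodule.mem_colon_singleton, Algebra.smul_def, ← map_mul,
    Quotient.eq_zero_iff_mem] using hw c hc

lemma exists_le_radical_of_mem_associatedPrimes_biInf {ι : Type*} {S : Set ι}
    {Q : ι → Ideal R} (hQ : ∀ i ∈ S, (Q i).IsPrimary) {P : Ideal R}
    (hP : P ∈ associatedPrimes R (R ⧸ ⨅ i ∈ S, Q i)) : ∃ i ∈ S, P ≤ (Q i).radical := by
  obtain ⟨hPprime, x, rfl⟩ := hP
  obtain ⟨w, rfl⟩ := Ideal.Quotient.mk_surjective x
  obtain ⟨i, hiS, hwi⟩ : ∃ i ∈ S, w ∉ Q i := by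
    by_contra! hw
    apply hPprime.ne_top
    have hw0 : Ideal.Quotient.mk (⨅ i ∈ S, Q i) w = 0 := by
      simpa [Quotient.eq_zero_iff_mem, mem_iInf] using hw
    rw [hw0, Submodule.colon_singleton_zero, radical_top]
  refine ⟨i, hiS, radical_le_radical_iff.mpr fun c hc => ?_⟩
  have hcw : c * w ∈ Q i := by
    simp only [Submodule.mem_colon_singleton, Submodule.mem_bot, Algebra.smul_def,
      Quotient.algebraMap_eq, ← map_mul, Quotient.eq_zero_iff_mem, mem_iInf] at hc
    exact hc i hiS
  exact ((isPrimary_iff.mp (hQ i hiS)).2 (mul_comm c w ▸ hcw)).resolve_left hwi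

lemma mul_le_pow_succ_of_pow_eq_inf [IsNoetherianRing R] {I J 𝔞 : Ideal R} {k : ℕ}
    (hk : I ^ k = J ⊓ 𝔞) (h𝔞 : ∀ P ∈ associatedPrimes R (R ⧸ I ^ (k + 1)), ¬ 𝔞 ≤ P) :
    J * I ≤ I ^ (k + 1) := by
  rw [Ideal.mul_le]
  intro z hz a ha
  refine mem_of_forall_mul_mem_of_not_le_associatedPrimes h𝔞 fun c hc => ?_
  have hzc : z * c ∈ I ^ k := hk ▸ ⟨J.mul_mem_right c hz, 𝔞.mul_mem_left z hc⟩
  rw [pow_succ]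
  convert Ideal.mul_mem_mul hzc ha using 1
  ring

end Ideal

namespace MvPolynomial

variable {σ R : Type*} [CommRing R]

open scoped Classical in
/-- Substitutes `X i ↦ X i * t` for `i ∈ s`, so that the coefficient of `t ^ e` collects the
monomials of `f` containing exactly `e` variables from `s`, counted with multiplicity. -/
noncomputable def tagVars (s : Set σ) : MvPolynomial σ R →ₐ[R] Polynomial (MvPolynomial σ R) :=
  aeval fun i => if i ∈ s then Polynomial.C (X i) * Polynomial.X else Polynomial.C (X i)

lemma eval_one_tagVars (s : Set σ) (f : MvPolynomial σ R) : (tagVars s f).eval 1 = f := by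
  classical
  have : ((Polynomial.aeval (1 : MvPolynomial σ R)).restrictScalars R).comp (tagVars s) =
      AlgHom.id R _ := by
    ext i
    by_cases hi : i ∈ s <;> simp [tagVars, hi]
  simpa using congrArg (fun φ => φ f) this

lemma tagVars_ne_zero {s : Set σ} {f : MvPolynomial σ R} (hf : f ≠ 0) : tagVars s f ≠ 0 :=
  fun h => hf (by rw [← eval_one_tagVars s f, h, Polynomial.eval_zero])

lemma coeff_tagVars_mem (s : Set σ) (f : MvPolynomial σ R) (e : ℕ) :
    (tagVars s f).coeff e ∈ Ideal.span (X '' s) ^ e := by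
  classical
  induction f using MvPolynomial.induction_on generalizing e with
  | C a =>
    rcases e with _ | e
    · simp
    · simp [tagVars]
  | add p q hp hq => simpa using Ideal.add_mem _ (hp e) (hq e)
  | mul_X p i hp =>
    by_cases hi : i ∈ s
    · rcases e with _ | e
      · simp [tagVars, hi]
      · have hX : X i ∈ Ideal.span (X '' s : Set (MvPolynomial σ R)) :=
          Ideal.subset_span ⟨i, hi, rfl⟩
        simpa [tagVars, hi, ← mul_assoc, pow_succ] using Ideal.mul_mem_mul (hp e) hX
    · simpa [tagVars, hi] using Ideal.mul_mem_right (X i) _ (hp e)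

lemma mem_span_X_pow_iff_X_pow_dvd {s : Set σ} {j : ℕ} {f : MvPolynomial σ R} :
    f ∈ Ideal.span (X '' s) ^ j ↔ Polynomial.X ^ j ∣ tagVars s f := by
  classical
  constructor
  · have hle :
        Ideal.span (X '' s) ≤ (Ideal.span {Polynomial.X}).comap (tagVars (R := R) s) := by
      rw [Ideal.span_le]
      rintro _ ⟨i, hi, rfl⟩
      simp [tagVars, hi, Ideal.mem_span_singleton]
    intro hf
    have := Ideal.le_comap_pow _ j (Ideal.pow_right_mono hle j hf)
    rwa [Ideal.mem_comap, Ideal.span_singleton_pow, Ideal.mem_span_singleton] at this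
  · intro hdvd
    rw [← eval_one_tagVars s f, Polynomial.eval_eq_sum, Polynomial.sum_def]
    refine Ideal.sum_mem _ fun e he => ?_
    have hje : j ≤ e := by
      by_contra hlt
      exact Polynomial.mem_support_iff.mp he (Polynomial.X_pow_dvd_iff.mp hdvd e (by omega))
    simpa using Ideal.pow_le_pow_right hje (coeff_tagVars_mem s f e)

/-- The least number of variables from `s`, counted with multiplicity, in a monomial of `f`. -/
noncomputable def orderIn (s : Set σ) (f : MvPolynomial σ R) : ℕ :=
  (tagVars s f).natTrailingDegree

lemma mem_span_X_pow_iff {s : Set σ} {j : ℕ} {f : MvPolynomial σ R} (hf : f ≠ 0) :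
    f ∈ Ideal.span (X '' s) ^ j ↔ j ≤ orderIn s f := by
  rw [mem_span_X_pow_iff_X_pow_dvd, Polynomial.X_pow_dvd_iff]
  exact ⟨Polynomial.le_natTrailingDegree (tagVars_ne_zero hf),
    fun h _ hd => Polynomial.coeff_eq_zero_of_lt_natTrailingDegree (hd.trans_le h)⟩

lemma orderIn_mul [IsDomain R] (s : Set σ) {f g : MvPolynomial σ R} (hf : f ≠ 0) (hg : g ≠ 0) :
    orderIn s (f * g) = orderIn s f + orderIn s g := by
  rw [orderIn, map_mul,
    Polynomial.natTrailingDegree_mul (tagVars_ne_zero hf) (tagVars_ne_zero hg)]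
  rfl

lemma one_notMem_span_X [Nontrivial R] (s : Set σ) :
    (1 : MvPolynomial σ R) ∉ Ideal.span (X '' s) := by
  rw [← pow_one (Ideal.span _), mem_span_X_pow_iff one_ne_zero]
  simp [orderIn]

lemma mem_span_X_of_mul_mem_span_X_pow [IsDomain R] {s : Set σ} {j : ℕ}
    {a b : MvPolynomial σ R}
    (hab : a * b ∈ Ideal.span (X '' s) ^ j) (ha : a ∉ Ideal.span (X '' s) ^ j) :
    b ∈ Ideal.span (X '' s) := by
  have ha0 : a ≠ 0 := by rintro rfl; exact ha (zero_mem _)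
  by_cases hb0 : b = 0
  · simp [hb0]
  rw [← pow_one (Ideal.span _), mem_span_X_pow_iff hb0]
  rw [mem_span_X_pow_iff (mul_ne_zero ha0 hb0), orderIn_mul s ha0 hb0] at hab
  rw [mem_span_X_pow_iff ha0] at ha
  omega

lemma isPrime_span_X_image [IsDomain R] (s : Set σ) :
    (Ideal.span (X '' s : Set (MvPolynomial σ R))).IsPrime := by
  refine ⟨(Ideal.ne_top_iff_one _).mpr (one_notMem_span_X s), fun {a b} hab => ?_⟩
  exact or_iff_not_imp_left.mpr fun ha =>
    mem_span_X_of_mul_mem_span_X_pow (j := 1) (by simpa using hab) (by simpa using ha)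

lemma isPrimary_span_X_pow [IsDomain R] (s : Set σ) {j : ℕ} (hj : j ≠ 0) :
    (Ideal.span (X '' s : Set (MvPolynomial σ R)) ^ j).IsPrimary := by
  refine Ideal.isPrimary_iff.mpr
    ⟨fun htop => one_notMem_span_X (R := R) s ?_, fun {a b} hab => ?_⟩
  · exact Ideal.pow_le_self hj (htop ▸ Submodule.mem_top)
  · exact or_iff_not_imp_left.mpr fun ha =>
      ⟨j, Ideal.pow_mem_pow (mem_span_X_of_mul_mem_span_X_pow hab ha) j⟩

lemma radical_span_X_pow [IsDomain R] (s : Set σ) {j : ℕ} (hj : j ≠ 0) :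
    (Ideal.span (X '' s : Set (MvPolynomial σ R)) ^ j).radical = Ideal.span (X '' s) := by
  rw [Ideal.radical_pow _ hj, (isPrime_span_X_image s).radical]

lemma le_span_X_pow_of_mul_le_mul_right [IsDomain R] {s : Set σ} {L : ℕ}
    {I J : Ideal (MvPolynomial σ R)} (hI : I ≠ ⊥) (h : J * I ≤ Ideal.span (X '' s) ^ L * I) :
    J ≤ Ideal.span (X '' s) ^ L := by
  obtain ⟨u, ⟨huI, hu0⟩, hmin⟩ := exists_minimalFor_of_wellFoundedLT
    (fun u => u ∈ I ∧ u ≠ 0) (orderIn s) (Submodule.exists_mem_ne_zero_of_ne_bot hI)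
  have hIle : I ≤ Ideal.span (X '' s) ^ orderIn s u := by
    intro f hf
    by_cases hf0 : f = 0
    · simp [hf0]
    rw [mem_span_X_pow_iff hf0]
    by_contra! hlt
    exact hlt.not_ge (hmin ⟨hf, hf0⟩ hlt.le)
  intro z hz
  by_cases hz0 : z = 0
  · simp [hz0]
  have hzu : z * u ∈ Ideal.span (X '' s) ^ (L + orderIn s u) := by
    rw [pow_add]
    exact Ideal.mul_mono_right hIle (h (Ideal.mul_mem_mul hz huI))
  rw [mem_span_X_pow_iff (mul_ne_zero hz0 hu0), orderIn_mul s hz0 hu0] at hzu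
  rw [mem_span_X_pow_iff hz0]
  omega

lemma exists_eq_span_X_of_mem_minimalPrimes [IsDomain R] {S : Set (Finset σ)}
    {p : Ideal (MvPolynomial σ R)}
    (hp : p ∈ (Ideal.span ((fun T => ∏ i ∈ T, X i) '' S)).minimalPrimes) :
    ∃ B : Set σ, p = Ideal.span (X '' B) := by
  have := hp.isPrime
  have hle : Ideal.span (X '' {i | X i ∈ p}) ≤ p := by
    rw [Ideal.span_le]
    rintro _ ⟨i, hi, rfl⟩
    exact hi
  have hgen : Ideal.span ((fun T => ∏ i ∈ T, (X i : MvPolynomial σ R)) '' S) ≤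
      Ideal.span (X '' {i | (X i : MvPolynomial σ R) ∈ p}) := by
    rw [Ideal.span_le]
    rintro _ ⟨T, hT, rfl⟩
    obtain ⟨i, hiT, hip⟩ :=
      Ideal.IsPrime.prod_mem_iff.mp
        (hp.le (Ideal.subset_span ⟨T, hT, rfl⟩) : ∏ i ∈ T, X i ∈ p)
    exact Ideal.mem_of_dvd _ (Finset.dvd_prod_of_mem _ hiT) (Ideal.subset_span ⟨i, hip, rfl⟩)
  exact ⟨_, le_antisymm (hp.2 ⟨isPrime_span_X_image _, hgen⟩ hle) hle⟩

lemma pow_eq_of_pow_eq_inf_span_X_pow [IsDomain R] [Finite σ] [IsNoetherianRing R]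
    {s : Set σ} {I J : Ideal (MvPolynomial σ R)} {k L : ℕ} (hI : I ≠ ⊥)
    (hk : I ^ k = J ⊓ Ideal.span (X '' s) ^ L)
    (hs : ∀ P ∈ associatedPrimes (MvPolynomial σ R) (MvPolynomial σ R ⧸ I ^ (k + 1)),
      ¬ Ideal.span (X '' s) ≤ P) :
    I ^ k = J := by
  have hJI : J * I ≤ I ^ (k + 1) :=
    Ideal.mul_le_pow_succ_of_pow_eq_inf hk fun P hP hle =>
      hs P hP (hP.isPrime.le_of_pow_le hle)
  have hJ : J ≤ Ideal.span (X '' s) ^ L := by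
    refine le_span_X_pow_of_mul_le_mul_right hI (hJI.trans ?_)
    rw [pow_succ]
    exact Ideal.mul_mono_left (hk.trans_le inf_le_right)
  exact hk.trans (inf_eq_left.mpr hJ)

end MvPolynomial

theorem stmt_5 {K : Type*} [Field K] {n : ℕ}
    (I : Ideal (MvPolynomial (Fin n) K))
    (hI : IsWellNearlyNTFType I) :
    ∀ k : ℕ, 1 ≤ k →
      associatedPrimes (MvPolynomial (Fin n) K) ((MvPolynomial (Fin n) K) ⧸ I ^ k) ⊆
        associatedPrimes (MvPolynomial (Fin n) K) ((MvPolynomial (Fin n) K) ⧸ I ^ (k + 1)) := by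
  obtain ⟨⟨S, hIS⟩, ℓ, m, A, -, -, hlow, hhigh, hdecomp⟩ := hI
  intro k hk P hP
  rcases eq_or_ne I ⊥ with rfl | hI0
  · rwa [Ideal.bot_pow k.succ_ne_zero, ← Ideal.bot_pow (show k ≠ 0 by omega)]
  by_cases hPmin : P ∈ I.minimalPrimes
  · exact Ideal.minimalPrimes_subset_associatedPrimes_quotient _
      (by rwa [Ideal.minimalPrimes_pow _ k.succ_ne_zero])
  have hkm : m + 1 ≤ k := by
    by_contra!
    exact hPmin (hlow k hk (by omega) ▸ hP)
  obtain rfl : P = Ideal.span (X '' A) := (hhigh k hkm hP).resolve_left hPmin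
  have hIq : I ≤ Ideal.span (X '' A) := (isPrime_span_X_image A).le_of_pow_le
    (Ideal.le_of_mem_associatedPrimes_quotient hP)
  have hnot_le : ∀ p ∈ I.minimalPrimes, ¬ Ideal.span (X '' A) ≤ p := fun p hp hle =>
    hPmin (le_antisymm hle (hp.2 ⟨isPrime_span_X_image A, hIq⟩ hle) ▸ hp)
  by_contra hnot
  have hIk : I ^ k = ⨅ p ∈ I.minimalPrimes, p ^ k :=
    pow_eq_of_pow_eq_inf_span_X_pow hI0 (hdecomp k hkm hP) fun P hP =>
      hnot_le P ((hhigh (k + 1) (by omega) hP).resolve_right fun h => hnot (h ▸ hP))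
  have hspan : ∀ p ∈ I.minimalPrimes, ∃ B : Set (Fin n), p = Ideal.span (X '' B) :=
    fun p hp => exists_eq_span_X_of_mem_minimalPrimes (hIS ▸ hp)
  obtain ⟨p, hp, hle_rad⟩ := Ideal.exists_le_radical_of_mem_associatedPrimes_biInf
    (fun p hp => by
      obtain ⟨B, rfl⟩ := hspan p hp
      exact isPrimary_span_X_pow B (by omega))
    (hIk ▸ hP)
  obtain ⟨B, rfl⟩ := hspan p hp
  exact hnot_le _ hp (by rwa [radical_span_X_pow B (by omega)] at hle_rad)
end

section
/- Let K be a field, R = K[x_1,…,x_n,x_{n+1}], and let I ⊆ R be a monomial ideal none of whose minimal monomial generators is divisible by x_{n+1}. Let 𝔮 = (x_1,…,x_n), assume I ≠ 𝔮, and set L = I + x_{n+1}𝔮. Suppose (I^t :_R v) = 𝔮 for some integer t ≥ 1 and some monomial v ∈ R, and suppose that whenever 1 ≤ λ ≤ n and x_λ v = f_1 ⋯ f_t M with f_1,…,f_t minimal monomial generators of I and M a monomial of R, there exists 1 ≤ j ≤ t such that x_λ divides M f_j and M f_j / x_λ ≠ 1. Then 𝔪 = (x_1,…,x_{n+1}) ∈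 Ass(R/L^t). -/
/-!
Write `I` for the monomial ideal, `v = x^w`, and `v'` for `v` with the variable `x_{n+1}` deleted.
Then `v'` is annihilated by `𝔪` modulo `L^t` but does not lie in `L^t`, so `𝔪 = (L^t : v')`.

Substituting `x_{n+1} ↦ 1` fixes `I` and sends `x_i v` to `x_i v'`, so `x_i v' ∈ I^t ⊆ L^t` for
`i ≤ n`. Substituting `x_{n+1} ↦ 0` maps `L` into `I` and fixes `v'`, so `v' ∈ L^t` would give
`v ∈ I^t`, i.e. `(I^t : v) = R ≠ 𝔮`. Finally, as `I ⊊ 𝔮`, some `x_λ ∉ I`; writing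
`x_λ v = f_1 ⋯ f_t M` and taking `j` from the hypothesis, `v = (∏_{i ≠ j} f_i) · P` with
`P = M f_j / x_λ`. The part of `P` prime to `x_{n+1}` is not `1`, since otherwise `f_j ∣ x_λ`;
hence `x_{n+1} P ∈ x_{n+1} 𝔮 ⊆ L` and `x_{n+1} v' ∈ I^{t-1} L ⊆ L^t`.
-/

open MvPolynomial

namespace MvPolynomial

variable {σ K : Type*}

variable (K) in
noncomputable abbrev monomialIdeal [CommSemiring K] (S : Set (σ →₀ ℕ)) :
    Ideal (MvPolynomial σ K) :=
  Ideal.span ((fun d => monomial d 1) '' S)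

section CommSemiring

variable [CommSemiring K] {S : Set (σ →₀ ℕ)}

theorem monomial_mem_monomialIdeal [Nontrivial K] {b : σ →₀ ℕ} :
    monomial b (1 : K) ∈ monomialIdeal K S ↔ ∃ d ∈ S, d ≤ b := by
  classical
  simp [mem_ideal_span_monomial_image, support_monomial]

theorem monomial_mem_span_X_image [Nontrivial K] {s : Set σ} {b : σ →₀ ℕ} :
    monomial b (1 : K) ∈ Ideal.span (X '' s) ↔ ∃ i ∈ s, b i ≠ 0 := by
  classical
  simp [mem_ideal_span_X_image, support_monomial]

theorem monomialIdeal_pow (S : Set (σ →₀ ℕ)) (t : ℕ) :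
    monomialIdeal K S ^ t =
      monomialIdeal K {d | ∃ c : Fin t → σ →₀ ℕ, (∀ i, c i ∈ S) ∧ ∑ i, c i = d} := by
  rw [monomialIdeal, Ideal.span, Submodule.span_pow]
  congr 1
  ext p
  simp only [Set.mem_pow, List.prod_ofFn, Set.mem_image, Set.mem_ofPred_eq]
  constructor
  · rintro ⟨g, rfl⟩
    choose c hcS hc using fun i => (g i).2
    exact ⟨_, ⟨c, hcS, rfl⟩, by simp [monomial_sum_one, hc]⟩
  · rintro ⟨_, ⟨c, hcS, rfl⟩, rfl⟩
    exact ⟨fun i => ⟨_, c i, hcS i, rfl⟩, by simp [monomial_sum_one]⟩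

theorem monomialIdeal_le_span_X_compl [Nontrivial K] {a : σ} (hS : ∀ d ∈ S, d a = 0)
    (h0 : 0 ∉ S) : monomialIdeal K S ≤ Ideal.span (X '' {a}ᶜ) := by
  refine Ideal.span_le.mpr ?_
  rintro _ ⟨d, hd, rfl⟩
  obtain ⟨i, hi⟩ := Finsupp.ne_iff.mp (ne_of_mem_of_not_mem hd h0)
  exact monomial_mem_span_X_image.mpr ⟨i, fun h => hi (h ▸ hS d hd), hi⟩

theorem mem_of_minimal_monomial_mem_monomialIdeal [Nontrivial K] {e : σ →₀ ℕ}
    (he : Minimal (fun d => monomial d (1 : K) ∈ monomialIdeal K S) e) : e ∈ S := by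
  obtain ⟨d, hdS, hde⟩ := monomial_mem_monomialIdeal.mp he.prop
  rwa [← he.eq_of_le (monomial_mem_monomialIdeal.mpr ⟨d, hdS, le_rfl⟩) hde]

theorem exists_minimal_factorization [Nontrivial K] {t : ℕ} {b : σ →₀ ℕ}
    (hb : monomial b (1 : K) ∈ monomialIdeal K S ^ t) :
    ∃ e : Fin t → σ →₀ ℕ,
      (∀ j, Minimal (fun d => monomial d (1 : K) ∈ monomialIdeal K S) (e j)) ∧ ∑ j, e j ≤ b := by
  rw [monomialIdeal_pow, monomial_mem_monomialIdeal] at hb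
  obtain ⟨_, ⟨c, hcS, rfl⟩, hcb⟩ := hb
  choose e hec he using fun j => exists_minimal_le_of_wellFoundedLT
    (fun d => monomial d (1 : K) ∈ monomialIdeal K S) (c j) (Ideal.subset_span ⟨c j, hcS j, rfl⟩)
  exact ⟨e, he, (Finset.sum_le_sum fun j _ => hec j).trans hcb⟩

variable {a : σ}

section Substitution

variable [DecidableEq σ] (a) (c : K)

theorem aeval_update_monomial (d : σ →₀ ℕ) :
    aeval (Function.update X a (C c)) (monomial d (1 : K)) =
      monomial (d.erase a) 1 * C c ^ d a := by
  conv_lhs => rw [← Finsupp.erase_add_single a d, monomial_add_single]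
  rw [map_mul, map_pow, aeval_X, Function.update_self, aeval_monomial, monomial_eq]
  congr 1
  simp only [map_one, one_mul]
  refine Finsupp.prod_congr fun i hi => ?_
  have hia : i ≠ a := by
    rintro rfl
    exact Finsupp.mem_support_iff.mp hi Finsupp.erase_same
  rw [Function.update_of_ne hia]

theorem aeval_update_monomial_of_eq_zero {d : σ →₀ ℕ} (hd : d a = 0) :
    aeval (Function.update X a (C c)) (monomial d (1 : K)) = monomial d 1 := by
  rw [aeval_update_monomial, hd, pow_zero, mul_one,
    Finsupp.erase_of_notMem_support (Finsupp.notMem_support_iff.mpr hd)]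

theorem map_aeval_update_monomialIdeal_le (hS : ∀ d ∈ S, d a = 0) :
    (monomialIdeal K S).map (aeval (Function.update X a (C c))) ≤ monomialIdeal K S := by
  rw [Ideal.map_span, Ideal.span_le]
  rintro _ ⟨_, ⟨d, hd, rfl⟩, rfl⟩
  rw [aeval_update_monomial_of_eq_zero a c (hS d hd)]
  exact Ideal.subset_span ⟨d, hd, rfl⟩

end Substitution

theorem monomial_erase_mem_pow (hS : ∀ d ∈ S, d a = 0) {t : ℕ} {d : σ →₀ ℕ}
    (hd : monomial d (1 : K) ∈ monomialIdeal K S ^ t) :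
    monomial (d.erase a) (1 : K) ∈ monomialIdeal K S ^ t := by
  classical
  have := Ideal.mem_map_of_mem (aeval (Function.update X a (C (1 : K)))) hd
  rw [Ideal.map_pow, aeval_update_monomial, map_one, one_pow, mul_one] at this
  exact Ideal.pow_right_mono (map_aeval_update_monomialIdeal_le a 1 hS) t this

theorem monomial_mem_pow_of_monomial_erase_mem_pow_sup (hS : ∀ d ∈ S, d a = 0)
    (J : Ideal (MvPolynomial σ K)) {t : ℕ} {d : σ →₀ ℕ}
    (hd : monomial (d.erase a) (1 : K) ∈ (monomialIdeal K S + Ideal.span {X a} * J) ^ t) :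
    monomial d (1 : K) ∈ monomialIdeal K S ^ t := by
  classical
  have hmap : (monomialIdeal K S + Ideal.span {X a} * J).map
      (aeval (Function.update X a (C 0))) ≤ monomialIdeal K S := by
    rw [Ideal.add_eq_sup, Ideal.map_sup, Ideal.map_mul]
    refine sup_le (map_aeval_update_monomialIdeal_le a 0 hS) ?_
    rw [Ideal.map_span, Set.image_singleton, aeval_X, Function.update_self, map_zero,
      Ideal.span_singleton_zero, Ideal.bot_mul]
    exact bot_le
  have := Ideal.mem_map_of_mem (aeval (Function.update X a (C (0 : K)))) hd
  rw [Ideal.map_pow, aeval_update_monomial_of_eq_zero a 0 Finsupp.erase_same] at this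
  rw [← Finsupp.erase_add_single a d, monomial_add_single]
  exact Ideal.mul_mem_right _ _ (Ideal.pow_right_mono hmap t this)

theorem exists_decomposition_of_factorization [Nontrivial K] (hS : ∀ d ∈ S, d a = 0)
    {t : ℕ} {lam : σ} {w : σ →₀ ℕ}
    (hmem : monomial (Finsupp.single lam 1 + w) (1 : K) ∈ monomialIdeal K S ^ t)
    (hfact : ∀ (e : Fin t → σ →₀ ℕ) (M : σ →₀ ℕ),
      (∀ j, Minimal (fun d => monomial d (1 : K) ∈ monomialIdeal K S) (e j)) →
      Finsupp.single lam 1 + w = ∑ j, e j + M → ∃ j, 1 ≤ (M + e j) lam) :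
    ∃ E P f : σ →₀ ℕ, w = E + P ∧ E a = 0 ∧ monomial E (1 : K) ∈ monomialIdeal K S ^ (t - 1) ∧
      f ∈ S ∧ f ≤ Finsupp.single lam 1 + P := by
  obtain ⟨e, he, hle⟩ := exists_minimal_factorization hmem
  have heS : ∀ j, e j ∈ S := fun j => mem_of_minimal_monomial_mem_monomialIdeal (he j)
  set M := Finsupp.single lam 1 + w - ∑ j, e j
  have hsplit : Finsupp.single lam 1 + w = ∑ j, e j + M := (add_tsub_cancel_of_le hle).symm
  obtain ⟨j, hj⟩ := hfact e M he hsplit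
  have hP : Finsupp.single lam 1 + (M + e j - Finsupp.single lam 1) = M + e j :=
    add_tsub_cancel_of_le (Finsupp.single_le_iff.mpr hj)
  refine ⟨∑ i ∈ Finset.univ.erase j, e i, M + e j - Finsupp.single lam 1, e j, ?_, ?_, ?_,
    heS j, by rw [hP]; exact le_add_self⟩
  · apply add_left_cancel (a := Finsupp.single lam 1)
    rw [hsplit, ← Finset.sum_erase_add _ _ (Finset.mem_univ j), add_left_comm, hP]
    abel
  · rw [Finsupp.finsetSum_apply]
    exact Finset.sum_eq_zero fun i _ => hS _ (heS i)
  · have hcard : (Finset.univ.erase j).card = t - 1 := by simp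
    rw [monomial_sum_one, ← hcard, ← Finset.prod_const]
    exact Ideal.prod_mem_prod fun i _ => Ideal.subset_span ⟨e i, heS i, rfl⟩

theorem X_mul_monomial_erase_mem_pow_sup {I J : Ideal (MvPolynomial σ K)}
    (hJ : ∀ μ ≠ a, X μ ∈ J) {t : ℕ} (ht : 1 ≤ t) {lam : σ} (hlam : X lam ∉ I)
    {w E P f : σ →₀ ℕ} (hw : w = E + P) (hE : E a = 0) (hEI : monomial E (1 : K) ∈ I ^ (t - 1))
    (hfa : f a = 0) (hfI : monomial f (1 : K) ∈ I) (hf : f ≤ Finsupp.single lam 1 + P) :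
    X a * monomial (w.erase a) (1 : K) ∈ (I + Ideal.span {X a} * J) ^ t := by
  obtain ⟨μ, hμa, hPμ⟩ : ∃ μ ≠ a, P μ ≠ 0 := by
    by_contra! hP
    refine hlam (I.mem_of_dvd (monomial_dvd_monomial.mpr ⟨Or.inr fun ν => ?_, dvd_rfl⟩) hfI)
    by_cases hν : ν = a
    · subst hν
      simp [hfa]
    · simpa [hP ν hν] using hf ν
  have hPJ : monomial (P.erase a) (1 : K) ∈ J :=
    J.mem_of_dvd (X_dvd_monomial.mpr (Or.inr (by rwa [Finsupp.erase_ne hμa]))) (hJ μ hμa)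
  have hsplit :
      X a * monomial (w.erase a) (1 : K) = monomial E 1 * (X a * monomial (P.erase a) 1) := by
    rw [hw, Finsupp.erase_add, Finsupp.erase_of_notMem_support (Finsupp.notMem_support_iff.mpr hE),
      mul_left_comm, monomial_mul, mul_one]
  rw [hsplit, ← Nat.sub_add_cancel ht, pow_succ]
  exact Ideal.mul_mem_mul (Ideal.pow_right_mono le_sup_left _ hEI)
    (Ideal.mem_sup_right (Ideal.mul_mem_mul (Ideal.mem_span_singleton_self _) hPJ))

end CommSemiring

theorem isMaximal_idealOfVars [Field K] : (idealOfVars σ K).IsMaximal := by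
  have hker : idealOfVars σ K = RingHom.ker (constantCoeff : MvPolynomial σ K →+* K) := by
    ext p
    rw [← pow_one (idealOfVars σ K), mem_pow_idealOfVars_iff', RingHom.mem_ker, constantCoeff_eq]
    simp [Finsupp.degree_eq_zero_iff]
  rw [hker]
  exact RingHom.ker_isMaximal_of_surjective _ fun k => ⟨C k, constantCoeff_C ..⟩

end MvPolynomial

theorem Ideal.IsMaximal.mem_associatedPrimes_quotient {R : Type*} [CommRing R] {m J : Ideal R}
    (hm : m.IsMaximal) {u : R} (hu : u ∉ J) (hmu : m ≤ J.colon (Ideal.span {u})) :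
    m ∈ associatedPrimes R (R ⧸ J) := by
  have hcolon : (⊥ : Submodule R (R ⧸ J)).colon {Ideal.Quotient.mk J u} = m := by
    refine (hm.eq_of_le (fun htop => hu ?_) fun r hr => ?_).symm
    · have h1 := Submodule.mem_colon_singleton.mp (htop ▸ Submodule.mem_top : (1 : R) ∈ _)
      rwa [one_smul, Submodule.mem_bot, Ideal.Quotient.eq_zero_iff_mem] at h1
    · rw [Submodule.mem_colon_singleton, Submodule.mem_bot, Algebra.smul_def,
        Ideal.Quotient.algebraMap_eq, ← map_mul, Ideal.Quotient.eq_zero_iff_mem]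
      exact Ideal.mem_colon_span_singleton.mp (hmu hr)
  exact ⟨hm.isPrime, _, by rw [hcolon, hm.isPrime.radical]⟩

namespace MvPolynomial

variable {σ K : Type*} [Field K]

theorem idealOfVars_mem_associatedPrimes_quotient_pow {a : σ} {S : Set (σ →₀ ℕ)}
    (hS : ∀ d ∈ S, d a = 0) (hIq : monomialIdeal K S ≠ Ideal.span (X '' {a}ᶜ))
    {t : ℕ} (ht : 1 ≤ t) {w : σ →₀ ℕ}
    (hcolon : (monomialIdeal K S ^ t).colon (Ideal.span {monomial w (1 : K)}) =
      Ideal.span (X '' {a}ᶜ))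
    (hfact : ∀ lam ≠ a, ∀ (e : Fin t → σ →₀ ℕ) (M : σ →₀ ℕ),
      (∀ j, Minimal (fun d => monomial d (1 : K) ∈ monomialIdeal K S) (e j)) →
      Finsupp.single lam 1 + w = ∑ j, e j + M → ∃ j, 1 ≤ (M + e j) lam) :
    idealOfVars σ K ∈ associatedPrimes (MvPolynomial σ K) (MvPolynomial σ K ⧸
      (monomialIdeal K S + Ideal.span {X a} * Ideal.span (X '' {a}ᶜ)) ^ t) := by
  set I := monomialIdeal K S
  set q : Ideal (MvPolynomial σ K) := Ideal.span (X '' {a}ᶜ)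
  have hXq : ∀ i ≠ a, X i ∈ q := fun i hi => Ideal.subset_span ⟨i, hi, rfl⟩
  have hXw : ∀ i ≠ a, monomial (Finsupp.single i 1 + w) (1 : K) ∈ I ^ t := fun i hi => by
    have := Ideal.mem_colon_span_singleton.mp (hcolon ▸ hXq i hi)
    rwa [X, monomial_mul, one_mul] at this
  have hq_ne_top : q ≠ ⊤ := ne_top_of_le_ne_top isMaximal_idealOfVars.ne_top
    (Ideal.span_mono (Set.image_subset_range _ _))
  have hw : monomial w (1 : K) ∉ I ^ t := fun h => hq_ne_top ((Ideal.eq_top_iff_one _).mpr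
    (hcolon ▸ Ideal.mem_colon_span_singleton.mpr (by rwa [one_mul])))
  have h0 : 0 ∉ S := fun h0 => by
    have hI : I = ⊤ := (Ideal.eq_top_iff_one _).mpr (Ideal.subset_span ⟨0, h0, rfl⟩)
    exact hw (by rw [hI, Ideal.top_pow]; exact Submodule.mem_top)
  have hIq_le : I ≤ q := monomialIdeal_le_span_X_compl hS h0
  obtain ⟨lam, hlam_a, hlam⟩ : ∃ lam ≠ a, X lam ∉ I := by
    by_contra! h
    exact hIq (hIq_le.antisymm (Ideal.span_le.mpr fun _ ⟨i, hi, hX⟩ => hX ▸ h i hi))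
  obtain ⟨E, P, f, hwEP, hE, hEI, hfS, hf⟩ :=
    exists_decomposition_of_factorization hS (hXw lam hlam_a) (hfact lam hlam_a)
  refine isMaximal_idealOfVars.mem_associatedPrimes_quotient
    (fun h => hw (monomial_mem_pow_of_monomial_erase_mem_pow_sup hS q h)) ?_
  refine Ideal.span_le.mpr ?_
  rintro _ ⟨i, rfl⟩
  rw [SetLike.mem_coe, Ideal.mem_colon_span_singleton]
  by_cases hi : i = a
  · subst hi
    exact X_mul_monomial_erase_mem_pow_sup hXq ht hlam hwEP hE hEI (hS f hfS)
      (Ideal.subset_span ⟨f, hfS, rfl⟩) hf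
  · have := monomial_erase_mem_pow hS (hXw i hi)
    rw [Finsupp.erase_add, Finsupp.erase_single_ne (Ne.symm hi), monomial_single_add,
      pow_one] at this
    exact Ideal.pow_right_mono le_sup_left t this

end MvPolynomial

theorem stmt_7 {K : Type*} [Field K] {n : ℕ}
    (I : Ideal (MvPolynomial (Fin (n + 1)) K))
    -- `I` is a monomial ideal none of whose generators is divisible by `x_{n+1}`:
    (hI : ∃ S : Set (Fin (n + 1) →₀ ℕ), (∀ d ∈ S, d (Fin.last n) = 0) ∧
      I = Ideal.span ((fun d => (monomial d (1 : K))) '' S))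
    -- `𝔮 = (x_1, …, x_n)` and `I ≠ 𝔮`:
    (q : Ideal (MvPolynomial (Fin (n + 1)) K))
    (hq : q = Ideal.span (Set.range fun i : Fin n =>
      (X (Fin.castSucc i) : MvPolynomial (Fin (n + 1)) K)))
    (hIq : I ≠ q)
    (L : Ideal (MvPolynomial (Fin (n + 1)) K))
    (hL : L = I + Ideal.span {X (Fin.last n)} * q)
    (t : ℕ) (ht : 1 ≤ t)
    -- `(I^t : v) = 𝔮` for the monomial `v = monomial w 1`:
    (w : Fin (n + 1) →₀ ℕ)
    (hcolon : (I ^ t).colon (Ideal.span {monomial w (1 : K)}) = q)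
    -- whenever `x_λ v = f_1 ⋯ f_t M` with each `f_j` a minimal monomial generator of `I`
    -- and `M` a monomial, some `M f_j / x_λ` is defined and is not `1`:
    (hfact : ∀ (lam : Fin n) (e : Fin t → (Fin (n + 1) →₀ ℕ)) (Me : Fin (n + 1) →₀ ℕ),
      (∀ j : Fin t, monomial (e j) (1 : K) ∈ I ∧
        ∀ e' : Fin (n + 1) →₀ ℕ, monomial e' (1 : K) ∈ I → e' ≤ e j → e' = e j) →
      Finsupp.single (Fin.castSucc lam) 1 + w = (∑ j : Fin t, e j) + Me →
      ∃ j : Fin t, 1 ≤ (Me + e j) (Fin.castSucc lam) ∧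
        Me + e j ≠ Finsupp.single (Fin.castSucc lam) 1) :
    Ideal.span (Set.range (X : Fin (n + 1) → MvPolynomial (Fin (n + 1)) K)) ∈
      associatedPrimes (MvPolynomial (Fin (n + 1)) K)
        ((MvPolynomial (Fin (n + 1)) K) ⧸ L ^ t) := by
  obtain ⟨S, hS, rfl⟩ := hI
  have hq' : q = Ideal.span (X '' {Fin.last n}ᶜ) := by
    rw [hq, Set.range_comp' X Fin.castSucc]
    congr 2
    ext i
    exact Fin.exists_castSucc_eq
  subst hq' hL
  refine idealOfVars_mem_associatedPrimes_quotient_pow hS hIq ht hcolon ?_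
  intro lam hlam e M he hsum
  obtain ⟨l, rfl⟩ := Fin.exists_castSucc_eq.mpr hlam
  obtain ⟨j, hj, -⟩ :=
    hfact l e M (fun j => ⟨(he j).prop, fun _ h1 h2 => (he j).eq_of_le h1 h2⟩) hsum
  exact ⟨j, hj⟩
end
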